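/- arXiv:2602.05314 — 2 statements merged into one kernel-verified Lean document; each statement's English description precedes it below -/
import Mathlib

section
/- (Logarithmic Artin–Rees) Let A be a (not necessarily commutative) ring, let a ∈ A be a central-like element in the sense that Aa = aA (i.e., Aa is a two-sided ideal and a is a non-zero-divisor absorbing conjugation), let A be left noetherian, let M be a finitely generated left A-module and N ⊆ M a submodule. Then there exists n₀ ∈ ℕ such that for all n ≥ n₀, a^n M ∩ N ⊆ a^{n-n₀} N. -/
/-!
STATEMENT 2 (Logarithmic Artin–Rees).
`A` is a left noetherian ring, `a ∈ A` with `A·a = a·A` (two-sidedness of the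
principal left ideal, expressed elementwise), `M` a finitely generated left
`A`-module and `N ⊆ M` a submodule.  Then there exists `n₀` such that for all
`n ≥ n₀`, `a^n M ∩ N ⊆ a^{n-n₀} N`.
-/

theorem log_artin_rees (A : Type*) [Ring A] [IsNoetherianRing A] (a : A)
    (ha₁ : ∀ x : A, ∃ y : A, x * a = a * y)
    (ha₂ : ∀ y : A, ∃ x : A, x * a = a * y)
    (M : Type*) [AddCommGroup M] [Module A M] [Module.Finite A M]
    (N : Submodule A M) :
    ∃ n₀ : ℕ, ∀ n : ℕ, n₀ ≤ n →
      ∀ x : M, (∃ m : M, x = a ^ n • m) → x ∈ N →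
        ∃ y ∈ N, x = a ^ (n - n₀) • y := by
  -- a^n absorbs conjugation from the right: for each r there is r' with a^n * r = r' * a^n
  have key : ∀ (n : ℕ) (r : A), ∃ r' : A, a ^ n * r = r' * a ^ n := by
    intro n
    induction n with
    | zero => intro r; exact ⟨r, by simp⟩
    | succ n ih =>
      intro r
      obtain ⟨s, hs⟩ := ha₂ r
      obtain ⟨t, ht⟩ := ih s
      refine ⟨t, ?_⟩
      calc a ^ (n + 1) * r = a ^ n * (a * r) := by rw [pow_succ, mul_assoc]
        _ = (a ^ n * s) * a := by rw [← hs, mul_assoc]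
        _ = t * a ^ (n + 1) := by rw [ht, mul_assoc, ← pow_succ]
  -- the chain E n = {m | a^n • m ∈ N}
  let E : ℕ → Submodule A M := fun n =>
    { carrier := {m | a ^ n • m ∈ N}
      add_mem' := fun {x y} hx hy => by
        simp only [Set.mem_setOf_eq, smul_add] at *
        exact N.add_mem hx hy
      zero_mem' := by simp
      smul_mem' := fun r m hm => by
        obtain ⟨r', hr'⟩ := key n r
        simp only [Set.mem_setOf_eq] at *
        rw [← mul_smul, hr', mul_smul]
        exact N.smul_mem r' hm }
  have Emono : Monotone E := by
    apply monotone_nat_of_le_succ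
    intro n m hm
    show a ^ (n + 1) • m ∈ N
    have : a ^ (n + 1) • m = a • (a ^ n • m) := by rw [← mul_smul, ← pow_succ']
    rw [this]
    exact N.smul_mem a hm
  have : IsNoetherian A M := inferInstance
  obtain ⟨n₀, hn₀⟩ := monotone_stabilizes_iff_noetherian.mpr this ⟨E, Emono⟩
  refine ⟨n₀, fun n hn x hx hxN => ?_⟩
  obtain ⟨m, rfl⟩ := hx
  have hmE : m ∈ E n := hxN
  have hEn : E n₀ = E n := hn₀ n hn
  have hmE₀ : m ∈ E n₀ := by rw [hEn]; exact hmE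
  refine ⟨a ^ n₀ • m, hmE₀, ?_⟩
  rw [← mul_smul, ← pow_add, Nat.sub_add_cancel hn]
end

section
/- Let A be a left noetherian ring and a ∈ A with Aa = aA. Then the Rees ring B = ⊕_{i∈ℕ} a^i A u^i (a subring of the polynomial ring A[u]) is a graded ring, and if the associated graded ring gr A of a noetherian filtration on A is noetherian then B is left noetherian. -/
/-!
Noetherianity of `B` follows from that of `A` by the argument of the Hilbert basis theorem. For a
left ideal `I` of `B`, the `c : A` such that `a ^ n * c` is the `n`-th coefficient of some `q ∈ I`
of degree `≤ n` form a left ideal `L_n(I)` of `A`: multiplying `c` on the left by `x` amounts to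
multiplying `q` by the constant `y` with `y * a ^ n = a ^ n * x`, which exists since `aA ⊆ Aa`;
multiplying `q` by `a u` gives `L_n(I) ⊆ L_{n+1}(I)`. This chain stabilises at some `N`, and lifting
finitely many generators of `L_0(I), …, L_N(I)` into `I` yields a finitely generated `J ≤ I` with
`L_n(I) ⊆ L_n(J)` for every `n`, whence `J = I` by induction on the degree.
-/

open Polynomial

section Normal

variable {A : Type*} [Monoid A] {a : A}

theorem pow_dvd_mul_pow (ha : ∀ x : A, a ∣ x * a) (n : ℕ) (x : A) : a ^ n ∣ x * a ^ n := by
  induction n generalizing x with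
  | zero => simp
  | succ n ih =>
    obtain ⟨y, hy⟩ := ha x
    rw [pow_succ', ← mul_assoc, hy, mul_assoc]
    exact mul_dvd_mul_left a (ih y)

theorem exists_mul_pow_eq_pow_mul (ha : ∀ y : A, ∃ x, x * a = a * y) (n : ℕ) (y : A) :
    ∃ x, x * a ^ n = a ^ n * y := by
  induction n generalizing y with
  | zero => exact ⟨y, by simp⟩
  | succ n ih =>
    obtain ⟨x, hx⟩ := ih y
    obtain ⟨z, hz⟩ := ha x
    exact ⟨z, by rw [pow_succ', ← mul_assoc, hz, mul_assoc, hx, mul_assoc]⟩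

theorem pow_add_dvd_mul (ha : ∀ x : A, a ∣ x * a) {i j : ℕ} {u v : A} (hu : a ^ i ∣ u)
    (hv : a ^ j ∣ v) : a ^ (i + j) ∣ u * v := by
  obtain ⟨u, rfl⟩ := hu
  obtain ⟨v, rfl⟩ := hv
  rw [pow_add, mul_assoc, ← mul_assoc u]
  exact mul_dvd_mul_left _ ((pow_dvd_mul_pow ha j u).mul_right v)

end Normal

section Rees

variable {A : Type*} [Ring A]

def reesRing (a : A) (ha : ∀ x : A, a ∣ x * a) : Subring A[X] where
  carrier := {q | ∀ i, a ^ i ∣ q.coeff i}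
  zero_mem' i := by simp
  one_mem' i := by
    rw [coeff_one]
    split_ifs with h <;> simp [h]
  add_mem' hp hq i := by
    rw [coeff_add]
    exact dvd_add (hp i) (hq i)
  neg_mem' hp i := by
    rw [coeff_neg]
    exact (hp i).neg_right
  mul_mem' hp hq k := by
    rw [coeff_mul]
    refine Finset.dvd_sum fun ij hij => ?_
    rw [← Finset.HasAntidiagonal.mem_antidiagonal.mp hij]
    exact pow_add_dvd_mul ha (hp ij.1) (hq ij.2)

variable {a : A} {ha : ∀ x : A, a ∣ x * a}

theorem mem_reesRing {q : A[X]} : q ∈ reesRing a ha ↔ ∀ i, a ^ i ∣ q.coeff i := Iff.rfl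

theorem monomial_mem_reesRing_iff {n : ℕ} {c : A} :
    monomial n c ∈ reesRing a ha ↔ a ^ n ∣ c := by
  simp only [mem_reesRing, coeff_monomial]
  refine ⟨fun h => by simpa using h n, fun h i => ?_⟩
  split_ifs with hi
  · exact hi ▸ h
  · exact dvd_zero _

def leadCoeffs (J : Ideal (reesRing a ha)) (n : ℕ) : Set A :=
  {c | ∃ q ∈ J, (q : A[X]).natDegree ≤ n ∧ (q : A[X]).coeff n = a ^ n * c}

theorem mul_mem_leadCoeffs (ha' : ∀ y : A, ∃ x, x * a = a * y) {J : Ideal (reesRing a ha)}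
    {m : ℕ} {c : A} (hc : c ∈ leadCoeffs J m) (x : A) (k : ℕ) :
    x * c ∈ leadCoeffs J (m + k) := by
  obtain ⟨q, hqJ, hqm, hqc⟩ := hc
  obtain ⟨y, hy⟩ := exists_mul_pow_eq_pow_mul ha' m x
  let t : reesRing a ha := ⟨monomial k (a ^ k * y), monomial_mem_reesRing_iff.2 (dvd_mul_right _ _)⟩
  refine ⟨t * q, J.mul_mem_left t hqJ, ?_, ?_⟩
  · rw [Subring.coe_mul, add_comm]
    exact natDegree_mul_le.trans (add_le_add (natDegree_monomial_le _) hqm)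
  · change (monomial k (a ^ k * y) * (q : A[X])).coeff (m + k) = _
    rw [coeff_monomial_mul, hqc, mul_assoc, ← mul_assoc y, hy, mul_assoc (a ^ m), ← mul_assoc,
      ← pow_add, add_comm]

def leadIdeal (ha' : ∀ y : A, ∃ x, x * a = a * y) (J : Ideal (reesRing a ha)) (n : ℕ) :
    Ideal A where
  carrier := leadCoeffs J n
  zero_mem' := ⟨0, J.zero_mem, by simp, by simp⟩
  add_mem' := by
    rintro c d ⟨p, hpJ, hpn, hpc⟩ ⟨q, hqJ, hqn, hqc⟩
    refine ⟨p + q, J.add_mem hpJ hqJ, ?_, ?_⟩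
    · rw [Subring.coe_add]
      exact natDegree_add_le_of_degree_le hpn hqn
    · rw [Subring.coe_add, coeff_add, hpc, hqc, mul_add]
  smul_mem' x _ hc := mul_mem_leadCoeffs ha' hc x 0

theorem leadIdeal_mono (ha' : ∀ y : A, ∃ x, x * a = a * y) (J : Ideal (reesRing a ha)) :
    Monotone (leadIdeal ha' J) :=
  monotone_nat_of_le_succ fun _ c hc => one_mul c ▸ mul_mem_leadCoeffs ha' hc 1 1

theorem le_of_leadCoeffs_subset {I J : Ideal (reesRing a ha)} (hJI : J ≤ I)
    (h : ∀ n, leadCoeffs I n ⊆ leadCoeffs J n) : I ≤ J := by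
  suffices ∀ n, ∀ q ∈ I, (q : A[X]).natDegree ≤ n → q ∈ J from
    fun q hq => this _ q hq le_rfl
  intro n
  induction n using Nat.strong_induction_on with
  | _ n ih =>
  intro q hqI hqn
  obtain ⟨c, hc⟩ := q.2 n
  obtain ⟨r, hrJ, hrn, hrc⟩ := h n ⟨q, hqI, hqn, hc⟩
  suffices q - r ∈ J by simpa using J.add_mem this hrJ
  rcases eq_or_ne (q - r) 0 with h0 | h0
  · exact h0 ▸ J.zero_mem
  have hn : ((q - r : reesRing a ha) : A[X]).natDegree ≤ n := by
    simpa using natDegree_sub_le_of_le hqn hrn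
  have hlead : ((q - r : reesRing a ha) : A[X]).coeff n = 0 := by
    push_cast
    rw [coeff_sub, hc, hrc, sub_self]
  refine ih _ (hn.lt_of_ne fun hd => h0 ?_) _ (I.sub_mem hqI (hJI hrJ)) le_rfl
  rw [← hd] at hlead
  exact Subtype.ext (leadingCoeff_eq_zero.mp hlead)

theorem exists_finset_leadCoeffs_subset [IsNoetherianRing A]
    (ha' : ∀ y : A, ∃ x, x * a = a * y) (I : Ideal (reesRing a ha)) (n : ℕ) :
    ∃ T : Finset (reesRing a ha), (T : Set (reesRing a ha)) ⊆ I ∧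
      leadCoeffs I n ⊆ leadCoeffs (Ideal.span (T : Set (reesRing a ha))) n := by
  obtain ⟨S, hS⟩ := IsNoetherian.noetherian (leadIdeal ha' I n)
  classical
  have hlift : ∀ c ∈ S, c ∈ leadCoeffs I n := fun c hc =>
    (hS ▸ Submodule.subset_span hc : c ∈ leadIdeal ha' I n)
  choose! w hwI hw using hlift
  refine ⟨S.image w, by simpa [Set.subset_def] using hwI, ?_⟩
  exact (hS ▸ Submodule.span_le.2 fun c hc =>
    ⟨w c, Ideal.subset_span (Finset.mem_image_of_mem w hc), hw c hc⟩ :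
      leadIdeal ha' I n ≤ leadIdeal ha' (Ideal.span (S.image w : Set (reesRing a ha))) n)

theorem isNoetherianRing_reesRing [IsNoetherianRing A] (ha' : ∀ y : A, ∃ x, x * a = a * y) :
    IsNoetherianRing (reesRing a ha) := by
  classical
  refine (isNoetherianRing_iff_ideal_fg _).2 fun I => ?_
  obtain ⟨N, hN⟩ :=
    monotone_stabilizes_iff_noetherian.2 inferInstance ⟨leadIdeal ha' I, leadIdeal_mono ha' I⟩
  choose T hTI hT using exists_finset_leadCoeffs_subset ha' I
  set J := Ideal.span (((Finset.range (N + 1)).biUnion T : Finset _) : Set (reesRing a ha))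
  have hJI : J ≤ I := by
    rw [Ideal.span_le, Finset.coe_biUnion]
    exact Set.iUnion₂_subset fun m _ => hTI m
  refine ⟨_, le_antisymm hJI (le_of_leadCoeffs_subset hJI fun n => ?_)⟩
  have hstab : leadIdeal ha' I n ≤ leadIdeal ha' I (min n N) := by
    rcases le_total n N with h | h
    · rw [min_eq_left h]
    · rw [min_eq_right h]
      exact (hN n h).ge
  have hTJ : Ideal.span (T (min n N) : Set (reesRing a ha)) ≤ J :=
    Ideal.span_mono <| Finset.coe_subset.2 <|
      Finset.subset_biUnion_of_mem T (Finset.mem_range.2 (Nat.lt_succ_of_le (min_le_right n N)))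
  calc leadCoeffs I n ⊆ leadCoeffs I (min n N) := hstab
    _ ⊆ leadCoeffs (Ideal.span (T (min n N) : Set (reesRing a ha))) (min n N) := hT _
    _ ⊆ leadCoeffs J (min n N) := fun c ⟨q, hq, hqc⟩ => ⟨q, hTJ hq, hqc⟩
    _ ⊆ leadCoeffs J n := leadIdeal_mono ha' J (min_le_left n N)

end Rees

theorem rees_ring_graded_and_noetherian_general
    (A : Type) [Ring A] [IsNoetherianRing A] (a : A)
    (ha₁ : ∀ x : A, ∃ y : A, x * a = a * y)
    (ha₂ : ∀ y : A, ∃ x : A, x * a = a * y) :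
    ∃ B : Subring (Polynomial A),
      (∀ q : Polynomial A, q ∈ B ↔ ∀ i, ∃ x : A, q.coeff i = a ^ i * x) ∧
      (∀ q ∈ B, ∀ i, (Polynomial.C (q.coeff i)) * Polynomial.X ^ i ∈ B) ∧
      IsNoetherianRing B := by
  refine ⟨reesRing a ha₁, fun _ => Iff.rfl, fun q hq i => ?_, isNoetherianRing_reesRing ha₂⟩
  rw [C_mul_X_pow_eq_monomial, monomial_mem_reesRing_iff]
  exact hq i

theorem rees_ring_graded_and_noetherian
    (A : Type) [Ring A] [IsNoetherianRing A] (a : A)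
    (ha₁ : ∀ x : A, ∃ y : A, x * a = a * y)
    (ha₂ : ∀ y : A, ∃ x : A, x * a = a * y)
    -- an exhaustive multiplicative filtration `F_•A`
    (F : ℕ → AddSubgroup A)
    (hmono : Monotone F)
    (hexh : ∀ x : A, ∃ p, x ∈ F p)
    (hone : (1 : A) ∈ F 0)
    (hmul : ∀ p q (x y : A), x ∈ F p → y ∈ F q → x * y ∈ F (p + q))
    -- the associated graded ring, modelled abstractly
    (G : Type) [Ring G] [IsNoetherianRing G]
    (𝒜 : ℕ → AddSubgroup G)
    (hinternal : DirectSum.IsInternal 𝒜)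
    (σ : ∀ p, F p →+ G)
    (hrange : ∀ p, (σ p).range = 𝒜 p)
    (hker0 : ∀ x : F 0, σ 0 x = 0 ↔ (x : A) = 0)
    (hker : ∀ p (x : F (p + 1)), σ (p + 1) x = 0 ↔ (x : A) ∈ F p)
    (hσone : σ 0 ⟨1, hone⟩ = 1)
    (hσmul : ∀ p q (x : F p) (y : F q),
      σ (p + q) ⟨(x : A) * (y : A), hmul p q x y x.2 y.2⟩ = σ p x * σ q y) :
    ∃ B : Subring (Polynomial A),
      (∀ q : Polynomial A, q ∈ B ↔ ∀ i, ∃ x : A, q.coeff i = a ^ i * x) ∧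
      (∀ q ∈ B, ∀ i, (Polynomial.C (q.coeff i)) * Polynomial.X ^ i ∈ B) ∧
      IsNoetherianRing B :=
  rees_ring_graded_and_noetherian_general A a ha₁ ha₂
end
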